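/- Let n be a positive integer, λ an infinite cardinal, and τ a shift-continuous T₁ topology on I_λ^n. Then (I_λ^n, τ) is totally disconnected: every connected component is a singleton. -/

import Mathlib

open Set Topology

universe v

namespace ISemi

/-- The set of partial injective transformations (partial bijections) of `ι`
with rank (cardinality of the range, equivalently of the domain) at most `n`. -/
def Elem (ι : Type*) (n : ℕ) : Type _ :=
  {f : ι ≃. ι // {a : ι | (f a).isSome}.encard ≤ (n : ℕ∞)}

variable {ι : Type*} {n : ℕ}

/-- Composition of partial bijections (written multiplicatively). -/
instance : Semigroup (Elem ι n) where
  mul f g := ⟨f.1.trans g.1, by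
    refine le_trans (Set.encard_mono ?_) f.2
    intro a ha
    simp only [Set.mem_setOf_eq] at *
    rcases Option.isSome_iff_exists.1 ha with ⟨c, hc⟩
    rcases (PEquiv.trans_eq_some _ _ _ _).1 hc with ⟨b, hb, -⟩
    simp [hb]⟩
  mul_assoc f g h := Subtype.ext (PEquiv.trans_assoc f.1 g.1 h.1)

/-- The inverse partial bijection. -/
def inv (f : Elem ι n) : Elem ι n := ⟨f.1.symm, by
  have key : ∀ (g : ι ≃. ι), {b : ι | (g.symm b).isSome} ⊆
      (fun p : {a : ι | (g a).isSome} => (g p.1).get p.2) '' Set.univ := by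
    intro g b hb
    rcases Option.isSome_iff_exists.1 hb with ⟨a, ha⟩
    have ha' : b ∈ g a := (PEquiv.mem_iff_mem g).1 (Option.mem_def.2 ha)
    simp only [Option.mem_def] at ha'
    refine ⟨⟨a, ?_⟩, Set.mem_univ _, ?_⟩
    · simp [Set.mem_setOf_eq, ha']
    · simp [ha']
  calc {b : ι | (f.1.symm b).isSome}.encard
      ≤ ((fun p : {a : ι | (f.1 a).isSome} => (f.1 p.1).get p.2) '' Set.univ).encard :=
        Set.encard_mono (key f.1)
    _ ≤ (Set.univ : Set {a : ι | (f.1 a).isSome}).encard := Set.encard_image_le _ _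
    _ = {a : ι | (f.1 a).isSome}.encard := by rw [Set.encard_univ]; rfl
    _ ≤ (n : ℕ∞) := f.2⟩

/-- The zero (the empty partial map). -/
def zero (ι : Type*) (n : ℕ) : Elem ι n := ⟨⊥, by simp [PEquiv.bot_apply]⟩

/-- idempotents -/
def IsIdem (e : Elem ι n) : Prop := e * e = e

/-- The natural partial order on the inverse semigroup `Elem ι n`:
`f ≼ g` iff `f = e * g` for some idempotent `e`. -/
def nle (f g : Elem ι n) : Prop := ∃ e : Elem ι n, IsIdem e ∧ f = e * g

/-- up-set of `f` w.r.t. the natural partial order -/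
def upset (f : Elem ι n) : Set (Elem ι n) := {g | nle f g}

/-- the rank of a partial bijection: the cardinality of its domain (= range) -/
noncomputable def rank (f : Elem ι n) : ℕ∞ := {a : ι | (f.1 a).isSome}.encard

def dom (f : Elem ι n) : Set ι := {a : ι | (f.1 a).isSome}

def ran (f : Elem ι n) : Set ι := {b : ι | (f.1.symm b).isSome}

/-- A topology on `Elem ι n` is shift-continuous if all left and right
translations are continuous. -/
def ShiftContinuous (ι : Type*) (n : ℕ) [TopologicalSpace (Elem ι n)] : Prop :=
  ∀ a : Elem ι n, Continuous (fun x : Elem ι n => a * x) ∧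
    Continuous (fun x : Elem ι n => x * a)

/-- A space is feebly compact if every locally finite family of nonempty open
sets is finite. -/
def FeeblyCompact (X : Type*) [TopologicalSpace X] : Prop :=
  ∀ 𝒰 : Set (Set X), (∀ U ∈ 𝒰, IsOpen U ∧ U.Nonempty) →
    LocallyFinite (fun U : 𝒰 => (U : Set X)) → 𝒰.Finite

/-- A space is `d`-feebly compact if every discrete family of open sets is
finite; a family is discrete if every point has a neighbourhood meeting at
most one member of the family. -/
def DFeeblyCompact (X : Type*) [TopologicalSpace X] : Prop :=
  ∀ 𝒰 : Set (Set X), (∀ U ∈ 𝒰, IsOpen U) →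
    (∀ x : X, ∃ V ∈ 𝓝 x, {U ∈ 𝒰 | (U ∩ V).Nonempty}.Subsingleton) → 𝒰.Finite

/-- countably pracompact: there is a dense set `A` such that every infinite
subset of `A` has an accumulation point in `X`. -/
def CountablyPracompact (X : Type*) [TopologicalSpace X] : Prop :=
  ∃ A : Set X, Dense A ∧ ∀ B ⊆ A, B.Infinite → ∃ x : X, AccPt x (Filter.principal B)

/-- H-closed: closed in every Hausdorff space in which it embeds. -/
def HClosed (X : Type*) [TopologicalSpace X] : Prop :=
  ∀ (Y : Type v) (_ : TopologicalSpace Y), T2Space Y →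
    ∀ e : X → Y, IsEmbedding e → IsClosed (Set.range e)

/-- infra H-closed: every continuous image in a first-countable Hausdorff
space is closed. -/
def InfraHClosed (X : Type*) [TopologicalSpace X] : Prop :=
  ∀ (Y : Type v) (_ : TopologicalSpace Y), T2Space Y →
    FirstCountableTopology Y → ∀ f : X → Y, Continuous f → IsClosed (Set.range f)

/-- `Y`-compactness: every continuous image in `Y` is compact. -/
def YCompact (X : Type*) [TopologicalSpace X] (Y : Type*) [TopologicalSpace Y] : Prop :=
  ∀ f : X → Y, Continuous f → IsCompact (Set.range f)

/-- scattered: every nonempty subset has a point isolated in it. -/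
def Scattered (X : Type*) [TopologicalSpace X] : Prop :=
  ∀ S : Set X, S.Nonempty → ∃ x ∈ S, ∃ U : Set X, IsOpen U ∧ U ∩ S = {x}

/-- semiregular: there is a base consisting of regular open sets. -/
def Semiregular (X : Type*) [TopologicalSpace X] : Prop :=
  ∃ B : Set (Set X), TopologicalSpace.IsTopologicalBasis B ∧
    ∀ U ∈ B, interior (closure U) = U

/-- countably compact: every countable open cover has a finite subcover. -/
def CountablyCompact (X : Type*) [TopologicalSpace X] : Prop :=
  ∀ 𝒰 : Set (Set X), 𝒰.Countable → (∀ U ∈ 𝒰, IsOpen U) → ⋃₀ 𝒰 = Set.univ →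
    ∃ 𝒱 ⊆ 𝒰, 𝒱.Finite ∧ ⋃₀ 𝒱 = Set.univ

end ISemi

/-! For a partial bijection `α`, the map `x ↦ (α α⁻¹) x (α⁻¹ α)` cuts `x` down to the finite
rectangle `dom α × ran α`. It is continuous by shift-continuity and has finite range, so in a
T₁ topology all its fibres are clopen; its fibre over `α` is the up-set `↑α`. Distinct points
are separated by one of these clopen up-sets, since the natural partial order is antisymmetric. -/

theorem isClopen_preimage_of_finite_range {X Y : Type*} [TopologicalSpace X] [TopologicalSpace Y]
    [T1Space Y] {f : X → Y} (hf : Continuous f) (hfin : (range f).Finite) (s : Set Y) :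
    IsClopen (f ⁻¹' s) := by
  have := hfin.to_subtype
  exact (isClopen_discrete (Subtype.val ⁻¹' s)).preimage hf.rangeFactorization

theorem totallySeparatedSpace_of_isClopen_Ici {X : Type*} [TopologicalSpace X] [PartialOrder X]
    (h : ∀ x : X, IsClopen (Ici x)) : TotallySeparatedSpace X := by
  refine totallySeparatedSpace_iff_exists_isClopen.2 fun x y hxy => ?_
  by_cases hle : x ≤ y
  · exact ⟨(Ici y)ᶜ, (h y).compl, fun hyx => hxy (le_antisymm hle hyx), by simp⟩
  · exact ⟨Ici x, h x, le_rfl, hle⟩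

namespace ISemi

variable {ι : Type*} {n : ℕ}

-- Inclusion of graphs: the natural partial order of the inverse semigroup.
instance : PartialOrder (Elem ι n) := PartialOrder.lift Subtype.val Subtype.val_injective

theorem val_mul (f g : Elem ι n) : (f * g).1 = f.1.trans g.1 := rfl

theorem finite_dom (α : Elem ι n) : (dom α).Finite := Set.finite_of_encard_le_coe α.2

theorem finite_ran (α : Elem ι n) : (ran α).Finite := Set.finite_of_encard_le_coe (inv α).2

theorem mem_ran_of_apply_eq_some {α : Elem ι n} {a b : ι} (h : α.1 a = some b) : b ∈ ran α := by
  simp [ran, (PEquiv.eq_some_iff α.1).2 h]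

theorem graph_injective :
    Function.Injective (fun g : Elem ι n => {p : ι × ι | g.1 p.1 = some p.2}) :=
  fun _ _ h => Subtype.ext <| PEquiv.ext fun a => Option.ext fun b => Set.ext_iff.1 h (a, b)

theorem mul_inv_apply_eq_some (α : Elem ι n) (a b : ι) :
    (α * inv α).1 a = some b ↔ b = a ∧ b ∈ dom α := by
  classical
  show α.1.trans α.1.symm a = some b ↔ _
  rw [PEquiv.self_trans_symm, PEquiv.ofSet_eq_some_iff]
  rfl

theorem inv_mul_apply_eq_some (α : Elem ι n) (a b : ι) :
    (inv α * α).1 a = some b ↔ b = a ∧ b ∈ ran α := by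
  classical
  show α.1.symm.trans α.1 a = some b ↔ _
  rw [PEquiv.symm_trans_self, PEquiv.ofSet_eq_some_iff]
  rfl

def restrictDomRan (α x : Elem ι n) : Elem ι n := α * inv α * x * (inv α * α)

theorem restrictDomRan_apply_eq_some (α x : Elem ι n) (a b : ι) :
    (restrictDomRan α x).1 a = some b ↔ a ∈ dom α ∧ b ∈ ran α ∧ x.1 a = some b := by
  rw [restrictDomRan, val_mul, PEquiv.trans_eq_some]
  simp only [val_mul (α * inv α) x, PEquiv.trans_eq_some, mul_inv_apply_eq_some,
    inv_mul_apply_eq_some]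
  aesop

theorem restrictDomRan_eq_self_iff {α x : Elem ι n} : restrictDomRan α x = α ↔ α ≤ x := by
  constructor
  · intro h a b hab
    have : (restrictDomRan α x).1 a = some b := by rw [h]; exact hab
    exact ((restrictDomRan_apply_eq_some α x a b).1 this).2.2
  · intro hle
    refine Subtype.ext <| PEquiv.ext fun a => Option.ext fun b => ?_
    rw [restrictDomRan_apply_eq_some]
    constructor
    · rintro ⟨ha, -, hxa⟩
      obtain ⟨c, hc⟩ := Option.isSome_iff_exists.1 ha
      exact hc.trans ((hle a c hc).symm.trans hxa)
    · intro hab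
      exact ⟨by simp [dom, hab], mem_ran_of_apply_eq_some hab, hle a b hab⟩

theorem finite_range_restrictDomRan (α : Elem ι n) : (range (restrictDomRan α)).Finite := by
  refine Set.Finite.of_finite_image ?_ graph_injective.injOn
  refine ((finite_dom α).prod (finite_ran α)).finite_subsets.subset ?_
  rintro _ ⟨_, ⟨x, rfl⟩, rfl⟩ ⟨a, b⟩ hab
  exact ((restrictDomRan_apply_eq_some α x a b).1 hab).imp_right And.left

variable [TopologicalSpace (Elem ι n)]

theorem continuous_restrictDomRan (hshift : ShiftContinuous ι n) (α : Elem ι n) :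
    Continuous (restrictDomRan α) :=
  (hshift _).2.comp (hshift _).1

theorem isClopen_Ici [T1Space (Elem ι n)] (hshift : ShiftContinuous ι n) (α : Elem ι n) :
    IsClopen (Ici α) := by
  have : Ici α = restrictDomRan α ⁻¹' {α} := Set.ext fun _ => restrictDomRan_eq_self_iff.symm
  rw [this]
  exact isClopen_preimage_of_finite_range (continuous_restrictDomRan hshift α)
    (finite_range_restrictDomRan α) _

end ISemi

theorem stmt7_general (ι : Type*) (n : ℕ)
    [TopologicalSpace (ISemi.Elem ι n)] [T1Space (ISemi.Elem ι n)]
    (hshift : ISemi.ShiftContinuous ι n) :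
    TotallyDisconnectedSpace (ISemi.Elem ι n) :=
  haveI := totallySeparatedSpace_of_isClopen_Ici (ISemi.isClopen_Ici hshift)
  inferInstance

theorem stmt7 (ι : Type*) [Infinite ι] (n : ℕ) (hn : 0 < n)
    [TopologicalSpace (ISemi.Elem ι n)] [T1Space (ISemi.Elem ι n)]
    (hshift : ISemi.ShiftContinuous ι n) :
    TotallyDisconnectedSpace (ISemi.Elem ι n) :=
  stmt7_general ι n hshift
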